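/- arXiv:2507.09026 — 2 statements merged into one kernel-verified Lean document; each statement's English description precedes it below -/
import Mathlib

section
/- Let E ∈ R^{n_u × n_x}, Σ ∈ R^{n_x × n_x} symmetric positive definite, and S ∈ R^{n_x × m} with pseudoinverse S† satisfying S S† = I. If G = 2 E Σ S†ᵀ, then Tr(EᵀE) = Tr(S Σ⁻¹ GᵀG Σ⁻¹ Sᵀ)/4 ≤ ‖S‖² · ‖G‖_F² / (4 σ_min(Σ)²), where ‖·‖_F is the Frobenius norm, ‖S‖ the spectral norm, and σ_min(Σ) the minimum eigenvalue of Σ. -/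
open Matrix

noncomputable def specNorm {m n : ℕ} (M : Matrix (Fin m) (Fin n) ℝ) : ℝ :=
  ‖LinearMap.toContinuousLinearMap (Matrix.toEuclideanLin M)‖

noncomputable def frobNorm {m n : ℕ} (M : Matrix (Fin m) (Fin n) ℝ) : ℝ :=
  Real.sqrt (∑ i, ∑ j, (M i j) ^ 2)

noncomputable def minEig {n : ℕ} (M : Matrix (Fin n) (Fin n) ℝ) : ℝ :=
  sInf {μ : ℝ | Module.End.HasEigenvalue (Matrix.toLin' M) μ}

noncomputable def specRad {n : ℕ} (M : Matrix (Fin n) (Fin n) ℝ) : ℝ :=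
  sSup {r : ℝ | ∃ μ ∈ spectrum ℂ (M.map (Complex.ofReal ·)), r = ‖μ‖}

lemma eigvec_image {n : ℕ} {Sig : Matrix (Fin n) (Fin n) ℝ} (hA : Sig.IsHermitian) (i : Fin n) :
    Matrix.toEuclideanLin Sig (hA.eigenvectorBasis i) = hA.eigenvalues i • hA.eigenvectorBasis i := by
  have h := hA.mulVec_eigenvectorBasis i
  rw [toEuclideanLin_apply]; ext j
  simpa using congrFun h j

lemma inner_toEuc {n : ℕ} {Sig : Matrix (Fin n) (Fin n) ℝ} (hA : Sig.IsHermitian) (i : Fin n)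
    (x : EuclideanSpace ℝ (Fin n)) :
    inner ℝ (hA.eigenvectorBasis i) (Matrix.toEuclideanLin Sig x) =
      hA.eigenvalues i * (inner ℝ (hA.eigenvectorBasis i) x : ℝ) := by
  have hsymm := (Matrix.isHermitian_iff_isSymmetric.1 hA)
  rw [← hsymm (hA.eigenvectorBasis i) x, eigvec_image hA i, real_inner_smul_left]

lemma parseval_sq {n : ℕ} (b : OrthonormalBasis (Fin n) ℝ (EuclideanSpace ℝ (Fin n)))
    (x : EuclideanSpace ℝ (Fin n)) :
    ∑ i, (inner ℝ (b i) x : ℝ) ^ 2 = ‖x‖ ^ 2 := by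
  have h := b.sum_inner_mul_inner x x
  rw [real_inner_self_eq_norm_sq] at h
  rw [← h]
  refine Finset.sum_congr rfl fun i _ => ?_
  rw [real_inner_comm x (b i), sq]

lemma minEig_facts {n : ℕ} {Sig : Matrix (Fin n) (Fin n) ℝ} (hSig : Sig.PosDef) :
    (∀ i, minEig Sig ≤ hSig.1.eigenvalues i) ∧ 0 ≤ minEig Sig ∧ (n ≠ 0 → 0 < minEig Sig) := by
  by_cases hn : n = 0
  · subst hn
    have he : {μ : ℝ | Module.End.HasEigenvalue (Matrix.toLin' Sig) μ} = ∅ := by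
      ext μ
      simp only [Set.mem_setOf_eq, Set.mem_empty_iff_false, iff_false]
      intro h
      obtain ⟨v, hv⟩ := h.exists_hasEigenvector
      exact hv.2 (Subsingleton.elim _ _)
    refine ⟨fun i => i.elim0, ?_, fun h => absurd rfl h⟩
    unfold minEig; rw [he, Real.sInf_empty]
  · haveI : Nonempty (Fin n) := ⟨⟨0, Nat.pos_of_ne_zero hn⟩⟩
    set hA := hSig.1
    set b := hA.eigenvectorBasis with hb
    set lam := hA.eigenvalues with hlam
    set T := {μ : ℝ | Module.End.HasEigenvalue (Matrix.toLin' Sig) μ} with hT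
    have hmem : ∀ i, lam i ∈ T := by
      intro i
      have hv : Matrix.toLin' Sig ⇑(b i) = lam i • ⇑(b i) := by
        rw [Matrix.toLin'_apply]; exact hA.mulVec_eigenvectorBasis i
      have hb0 : ⇑(b i) ≠ 0 := by
        intro h
        have h1 : ‖b i‖ = 1 := b.orthonormal.1 i
        have : b i = 0 := by ext j; exact congrFun h j
        rw [this, norm_zero] at h1; norm_num at h1
      exact Module.End.hasEigenvalue_of_hasEigenvector
        ⟨Module.End.mem_eigenspace_iff.2 hv, hb0⟩
    obtain ⟨i0, -, hi0⟩ := Finset.exists_min_image Finset.univ lam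
      ⟨Classical.arbitrary _, Finset.mem_univ _⟩
    have hlow : ∀ μ ∈ T, lam i0 ≤ μ := by
      intro μ hμ
      obtain ⟨v, hv⟩ := (hμ : Module.End.HasEigenvalue (Matrix.toLin' Sig) μ).exists_hasEigenvector
      have hmv : Sig *ᵥ v = μ • v := by
        have := Module.End.mem_eigenspace_iff.1 hv.1
        rwa [Matrix.toLin'_apply] at this
      set x : EuclideanSpace ℝ (Fin n) := (WithLp.equiv 2 (Fin n → ℝ)).symm v with hx
      have hx0 : x ≠ 0 := by
        intro h
        apply hv.2
        have : v = (WithLp.equiv 2 (Fin n → ℝ)) x := rfl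
        rw [this, h]; rfl
      have hTx : Matrix.toEuclideanLin Sig x = μ • x := by
        rw [hx, WithLp.equiv_symm_apply, toEuclideanLin_apply_piLp_toLp, hmv, WithLp.toLp_smul]
      have hsum : (inner ℝ x (Matrix.toEuclideanLin Sig x) : ℝ)
          = ∑ i, lam i * (inner ℝ (b i) x : ℝ) ^ 2 := by
        rw [← b.sum_inner_mul_inner x (Matrix.toEuclideanLin Sig x)]
        refine Finset.sum_congr rfl fun i _ => ?_
        rw [inner_toEuc hA i x, real_inner_comm x (b i)]
        ring
      have hxx : (inner ℝ x (Matrix.toEuclideanLin Sig x) : ℝ) = μ * ‖x‖ ^ 2 := by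
        rw [hTx, real_inner_smul_right, real_inner_self_eq_norm_sq]
      have hlb : lam i0 * ‖x‖ ^ 2 ≤ ∑ i, lam i * (inner ℝ (b i) x : ℝ) ^ 2 := by
        rw [← parseval_sq b x, Finset.mul_sum]
        exact Finset.sum_le_sum fun i _ =>
          mul_le_mul_of_nonneg_right (hi0 i (Finset.mem_univ i)) (sq_nonneg _)
      have hxpos : 0 < ‖x‖ ^ 2 := pow_pos (norm_pos_iff.mpr hx0) 2
      nlinarith [hsum, hxx, hlb, hxpos]
    have hbdd : BddBelow T := ⟨lam i0, hlow⟩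
    have hne : T.Nonempty := ⟨lam i0, hmem i0⟩
    have h2 : lam i0 ≤ minEig Sig := le_csInf hne hlow
    have h3 : 0 < lam i0 := hSig.eigenvalues_pos i0
    exact ⟨fun i => csInf_le hbdd (hmem i), le_of_lt (lt_of_lt_of_le h3 h2),
      fun _ => lt_of_lt_of_le h3 h2⟩

lemma norm_toEuc_ge {n : ℕ} {Sig : Matrix (Fin n) (Fin n) ℝ} (hSig : Sig.PosDef)
    (x : EuclideanSpace ℝ (Fin n)) :
    minEig Sig * ‖x‖ ≤ ‖Matrix.toEuclideanLin Sig x‖ := by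
  obtain ⟨hle, h0, -⟩ := minEig_facts hSig
  apply le_of_pow_le_pow_left₀ two_ne_zero (norm_nonneg _)
  rw [mul_pow]
  have hsum : ‖Matrix.toEuclideanLin Sig x‖ ^ 2
      = ∑ i, (hSig.1.eigenvalues i * (inner ℝ (hSig.1.eigenvectorBasis i) x : ℝ)) ^ 2 := by
    rw [← parseval_sq hSig.1.eigenvectorBasis (Matrix.toEuclideanLin Sig x)]
    refine Finset.sum_congr rfl fun i _ => ?_
    rw [inner_toEuc hSig.1 i x]
  rw [hsum, ← parseval_sq hSig.1.eigenvectorBasis x, Finset.mul_sum]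
  refine Finset.sum_le_sum fun i _ => ?_
  rw [mul_pow]
  exact mul_le_mul_of_nonneg_right (pow_le_pow_left₀ h0 (hle i) 2) (sq_nonneg _)

lemma inv_vec_bound {n : ℕ} {Sig : Matrix (Fin n) (Fin n) ℝ} (hSig : Sig.PosDef)
    (z : EuclideanSpace ℝ (Fin n)) :
    minEig Sig * ‖Matrix.toEuclideanLin Sig⁻¹ z‖ ≤ ‖z‖ := by
  have hdet : IsUnit Sig.det := hSig.det_pos.ne'.isUnit
  have h := norm_toEuc_ge hSig (Matrix.toEuclideanLin Sig⁻¹ z)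
  have hc : Matrix.toEuclideanLin Sig (Matrix.toEuclideanLin Sig⁻¹ z) = z := by
    simp [toEuclideanLin_apply, mulVec_mulVec, Matrix.mul_nonsing_inv _ hdet]
  rwa [hc] at h

lemma specNorm_bound {p q : ℕ} (M : Matrix (Fin p) (Fin q) ℝ) (x : EuclideanSpace ℝ (Fin q)) :
    ‖Matrix.toEuclideanLin M x‖ ≤ specNorm M * ‖x‖ := by
  have h := (LinearMap.toContinuousLinearMap (Matrix.toEuclideanLin M)).le_opNorm x
  simpa [specNorm, LinearMap.coe_toContinuousLinearMap'] using h

lemma rowApply {p q r : ℕ} (A : Matrix (Fin p) (Fin q) ℝ) (N : Matrix (Fin r) (Fin q) ℝ)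
    (i : Fin p) (k : Fin r) : (A * Nᵀ) i k = (N *ᵥ A i) k := by
  simp [Matrix.mul_apply, Matrix.mulVec, dotProduct, mul_comm]

/-- key trace bound in the gradient dominance proof:
if `G = 2 E Σ S†ᵀ` with `S S† = I`, `S† = Sᵀ(SSᵀ)⁻¹`, `Σ ≻ 0`, then
`Tr(EᵀE) = Tr(S Σ⁻¹ GᵀG Σ⁻¹ Sᵀ)/4 ≤ ‖S‖² ‖G‖_F² / (4 σ_min(Σ)²)`. -/
theorem trace_EtE_bound
    (nu nx m : ℕ)
    (E : Matrix (Fin nu) (Fin nx) ℝ)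
    (Sig : Matrix (Fin nx) (Fin nx) ℝ)
    (S : Matrix (Fin nx) (Fin m) ℝ)
    (Sdag : Matrix (Fin m) (Fin nx) ℝ)
    (G : Matrix (Fin nu) (Fin m) ℝ)
    (hSig : Sig.PosDef)
    (hSdag : Sdag = Sᵀ * (S * Sᵀ)⁻¹)
    (hSS : S * Sdag = 1)
    (hG : G = (2 : ℝ) • (E * Sig * Sdagᵀ)) :
    (Eᵀ * E).trace = (Sig⁻¹ * S * Gᵀ * G * Sᵀ * Sig⁻¹).trace / 4 ∧
    (Eᵀ * E).trace ≤ specNorm S ^ 2 * frobNorm G ^ 2 / (4 * minEig Sig ^ 2) := by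
  have hdet : IsUnit Sig.det := hSig.det_pos.ne'.isUnit
  have hSigT : Sigᵀ = Sig := by simpa [Matrix.IsHermitian] using hSig.1
  have h1 : Sig * Sig⁻¹ = 1 := Matrix.mul_nonsing_inv _ hdet
  have h2 : Sig⁻¹ * Sig = 1 := Matrix.nonsing_inv_mul _ hdet
  have h3 : Sdagᵀ * Sᵀ = 1 := by rw [← transpose_mul, hSS, transpose_one]
  have hinv : Sig⁻¹ᵀ = Sig⁻¹ := by rw [Matrix.transpose_nonsing_inv, hSigT]
  have key : Sig⁻¹ * S * Gᵀ * G * Sᵀ * Sig⁻¹ = (4 : ℝ) • (Eᵀ * E) := by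
    subst hG
    simp only [transpose_smul, transpose_mul, transpose_transpose, hSigT,
      Matrix.smul_mul, Matrix.mul_smul]
    have hX : Sig⁻¹ * S * (Sdag * (Sig * Eᵀ)) * (E * Sig * Sdagᵀ) * Sᵀ * Sig⁻¹ = Eᵀ * E := by
      calc Sig⁻¹ * S * (Sdag * (Sig * Eᵀ)) * (E * Sig * Sdagᵀ) * Sᵀ * Sig⁻¹
          = (Sig⁻¹ * (S * Sdag) * Sig) * (Eᵀ * E) * (Sig * (Sdagᵀ * Sᵀ) * Sig⁻¹) := by
            simp only [Matrix.mul_assoc]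
        _ = Eᵀ * E := by rw [hSS, h3, Matrix.mul_one, Matrix.mul_one, h2, h1, Matrix.one_mul,
            Matrix.mul_one]
    rw [hX, smul_smul]
    norm_num
  have part1 : (Eᵀ * E).trace = (Sig⁻¹ * S * Gᵀ * G * Sᵀ * Sig⁻¹).trace / 4 := by
    rw [key, Matrix.trace_smul, smul_eq_mul]
    ring
  refine ⟨part1, ?_⟩
  -- second part
  set M : Matrix (Fin nu) (Fin nx) ℝ := G * Sᵀ * Sig⁻¹ with hMdef
  have keyM : Mᵀ * M = (4 : ℝ) • (Eᵀ * E) := by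
    rw [← key, hMdef, transpose_mul, transpose_mul, transpose_transpose, hinv]
    simp only [Matrix.mul_assoc]
  have htr : ∑ i, ∑ k, (M i k) ^ 2 = 4 * (Eᵀ * E).trace := by
    have h4 : (Mᵀ * M).trace = ∑ k, ∑ i, (M i k) ^ 2 := by
      simp [Matrix.trace, Matrix.diag, Matrix.mul_apply, sq]
    rw [Finset.sum_comm, ← h4, keyM, Matrix.trace_smul, smul_eq_mul]
  -- row bound
  obtain ⟨-, hme0, -⟩ := minEig_facts hSig
  have rowb : ∀ i : Fin nu, minEig Sig ^ 2 * ∑ k, (M i k) ^ 2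
      ≤ specNorm S ^ 2 * ∑ j, (G i j) ^ 2 := by
    intro i
    set gi : EuclideanSpace ℝ (Fin m) := (WithLp.equiv 2 (Fin m → ℝ)).symm (G i) with hgi
    set w : EuclideanSpace ℝ (Fin nx) :=
      Matrix.toEuclideanLin Sig⁻¹ (Matrix.toEuclideanLin S gi) with hw
    have hweq : w = (WithLp.equiv 2 (Fin nx → ℝ)).symm ((Sig⁻¹ * S) *ᵥ G i) := by
      rw [hw, hgi, WithLp.equiv_symm_apply, toEuclideanLin_apply_piLp_toLp, toEuclideanLin_apply_piLp_toLp,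
        mulVec_mulVec]
      rfl
    have hM2 : M = G * (Sig⁻¹ * S)ᵀ := by
      rw [hMdef, transpose_mul, hinv, Matrix.mul_assoc]
    have hMw : ∀ k, M i k = w k := by
      intro k
      rw [hM2, rowApply, hweq]
      rfl
    have hwn : ∑ k, (M i k) ^ 2 = ‖w‖ ^ 2 := by
      rw [EuclideanSpace.norm_eq, Real.sq_sqrt (Finset.sum_nonneg fun k _ => sq_nonneg _)]
      refine Finset.sum_congr rfl fun k _ => ?_
      rw [hMw k, Real.norm_eq_abs, sq_abs]
    have hgn : ∑ j, (G i j) ^ 2 = ‖gi‖ ^ 2 := by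
      rw [EuclideanSpace.norm_eq, Real.sq_sqrt (Finset.sum_nonneg fun k _ => sq_nonneg _)]
      refine Finset.sum_congr rfl fun k _ => ?_
      rw [Real.norm_eq_abs, sq_abs]
      rfl
    have hb1 : minEig Sig * ‖w‖ ≤ specNorm S * ‖gi‖ := by
      calc minEig Sig * ‖w‖ ≤ ‖Matrix.toEuclideanLin S gi‖ := inv_vec_bound hSig _
        _ ≤ specNorm S * ‖gi‖ := specNorm_bound S gi
    have hb2 : (minEig Sig * ‖w‖) ^ 2 ≤ (specNorm S * ‖gi‖) ^ 2 :=
      pow_le_pow_left₀ (mul_nonneg hme0 (norm_nonneg _)) hb1 2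
    rw [hwn, hgn]
    calc minEig Sig ^ 2 * ‖w‖ ^ 2 = (minEig Sig * ‖w‖) ^ 2 := by ring
      _ ≤ (specNorm S * ‖gi‖) ^ 2 := hb2
      _ = specNorm S ^ 2 * ‖gi‖ ^ 2 := by ring
  have total : minEig Sig ^ 2 * (4 * (Eᵀ * E).trace) ≤ specNorm S ^ 2 * frobNorm G ^ 2 := by
    rw [← htr, Finset.mul_sum]
    have hfrob : frobNorm G ^ 2 = ∑ i, ∑ j, (G i j) ^ 2 := by
      unfold frobNorm
      exact Real.sq_sqrt (Finset.sum_nonneg fun i _ => Finset.sum_nonneg fun j _ => sq_nonneg _)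
    rw [hfrob, Finset.mul_sum]
    exact Finset.sum_le_sum fun i _ => rowb i
  by_cases hn : nx = 0
  · subst hn
    have htr0 : (Eᵀ * E).trace = 0 := by
      simp [Matrix.trace]
    rw [htr0]
    positivity
  · obtain ⟨-, -, hpos⟩ := minEig_facts hSig
    have hp := hpos hn
    rw [le_div_iff₀ (by positivity)]
    nlinarith [total]
end

section
/- Let f : R^d → R be differentiable with L-Lipschitz gradient and satisfy the gradient dominance (PL) inequality f(x) − f* ≤ μ ‖∇f(x)‖² for all x, where f* = inf f. Then gradient descent x_{n+1} = xₙ − η ∇f(xₙ) with step size η ≤ 1/L satisfies f(x_{n+1}) − f* ≤ (1 − η/(2μ)) (f(xₙ) − f*), provided η/(2μ) ≤ 1. -/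
open scoped RealInnerProductSpace

lemma descent_lemma {d : ℕ} (f : EuclideanSpace ℝ (Fin d) → ℝ) (L : ℝ) (hL : 0 < L)
    (hdiff : Differentiable ℝ f)
    (hLip : ∀ x y, ‖gradient f x - gradient f y‖ ≤ L * ‖x - y‖)
    (x v : EuclideanSpace ℝ (Fin d)) :
    f (x + v) ≤ f x + ⟪gradient f x, v⟫ + L / 2 * ‖v‖ ^ 2 := by
  set c : ℝ := ⟪gradient f x, v⟫ with hc
  have hderiv : ∀ t : ℝ, HasDerivAt (fun t : ℝ => f (x + t • v))
      (⟪gradient f (x + t • v), v⟫) t := by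
    intro t
    have h1 : HasDerivAt (fun t : ℝ => x + t • v) v t := by
      simpa using ((hasDerivAt_id t).smul_const v).const_add x
    have h2 := (hdiff (x + t • v)).hasGradientAt.hasFDerivAt
    have := h2.comp_hasDerivAt t h1
    simpa [Function.comp_def] using this
  set h : ℝ → ℝ := fun t => f (x + t • v) - c * t - (L / 2 * ‖v‖ ^ 2) * t ^ 2 with hdef
  have hh : ∀ t : ℝ, HasDerivAt h
      (⟪gradient f (x + t • v), v⟫ - c - (L / 2 * ‖v‖ ^ 2) * (2 * t)) t := by
    intro t
    have h3 : HasDerivAt (fun t : ℝ => c * t) c t := by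
      simpa using (hasDerivAt_id t).const_mul c
    have h4 : HasDerivAt (fun t : ℝ => (L / 2 * ‖v‖ ^ 2) * t ^ 2)
        ((L / 2 * ‖v‖ ^ 2) * (2 * t)) t := by
      have := (hasDerivAt_pow 2 t).const_mul (L / 2 * ‖v‖ ^ 2)
      simpa [mul_comm] using this
    exact ((hderiv t).sub h3).sub h4
  have hanti : AntitoneOn h (Set.Icc (0 : ℝ) 1) := by
    apply antitoneOn_of_deriv_nonpos (convex_Icc 0 1)
    · exact (fun t _ => ((hh t).differentiableAt).continuousAt.continuousWithinAt)
    · intro t ht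
      exact ((hh t).differentiableAt).differentiableWithinAt
    · intro t ht
      rw [interior_Icc] at ht
      rw [(hh t).deriv]
      have key : ⟪gradient f (x + t • v) - gradient f x, v⟫ ≤ L * t * ‖v‖ ^ 2 := by
        calc ⟪gradient f (x + t • v) - gradient f x, v⟫
            ≤ ‖gradient f (x + t • v) - gradient f x‖ * ‖v‖ := real_inner_le_norm _ _
          _ ≤ (L * ‖(x + t • v) - x‖) * ‖v‖ := by
              gcongr; exact hLip _ _
          _ = L * t * ‖v‖ ^ 2 := by
              have : ‖(x + t • v) - x‖ = |t| * ‖v‖ := by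
                simp [norm_smul, abs_of_pos ht.1]
              rw [this, abs_of_pos ht.1]; ring
      have : ⟪gradient f (x + t • v), v⟫ - c = ⟪gradient f (x + t • v) - gradient f x, v⟫ := by
        rw [hc, inner_sub_left]
      nlinarith [key, this.le, this.ge]
  have h01 : h 1 ≤ h 0 := hanti (by norm_num) (by norm_num) (by norm_num)
  simp only [hdef, one_smul, zero_smul, add_zero, mul_one, mul_zero, one_pow, sub_zero] at h01
  simp at h01
  linarith

/-- gradient descent on an L-smooth, gradient-dominated (PL) function
with step size `η ≤ 1/L` contracts the optimality gap by `1 - η/(2μ)` per step. -/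
theorem gd_pl_linear_convergence
    (d : ℕ) (f : EuclideanSpace ℝ (Fin d) → ℝ) (L μ η fstar : ℝ)
    (hdiff : Differentiable ℝ f)
    (hL : 0 < L) (hμ : 0 < μ) (hη : 0 < η)
    (hLip : ∀ x y, ‖gradient f x - gradient f y‖ ≤ L * ‖x - y‖)
    (hfstar : fstar = ⨅ x, f x)
    (hPL : ∀ x, f x - fstar ≤ μ * ‖gradient f x‖ ^ 2)
    (hηL : η ≤ 1 / L) (hημ : η / (2 * μ) ≤ 1) :
    ∀ x, f (x - η • gradient f x) - fstar ≤ (1 - η / (2 * μ)) * (f x - fstar) := by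
  intro x
  set g := gradient f x with hg
  have hdesc := descent_lemma f L hL hdiff hLip x (-(η • g))
  have hxe : x + (-(η • g)) = x - η • g := by abel
  rw [hxe] at hdesc
  have hinner : ⟪g, -(η • g)⟫ = -η * ‖g‖ ^ 2 := by
    rw [inner_neg_right, real_inner_smul_right, real_inner_self_eq_norm_sq]; ring
  have hnorm : ‖-(η • g)‖ ^ 2 = η ^ 2 * ‖g‖ ^ 2 := by
    rw [norm_neg, norm_smul]
    simp [abs_of_pos hη]; ring
  rw [hinner, hnorm] at hdesc
  -- f(x') ≤ f x - η‖g‖² + L/2 η² ‖g‖² ≤ f x - η/2 ‖g‖²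
  have hstep : f (x - η • g) ≤ f x - η / 2 * ‖g‖ ^ 2 := by
    have hLη : L / 2 * (η ^ 2 * ‖g‖ ^ 2) ≤ η / 2 * ‖g‖ ^ 2 := by
      have : L * η ≤ 1 := by
        have := (le_div_iff₀ hL).mp hηL
        linarith
      nlinarith [sq_nonneg ‖g‖, sq_nonneg η, hη]
    nlinarith [hdesc]
  have hPLx := hPL x
  have hfac : η / (2 * μ) * (f x - fstar) ≤ η / 2 * ‖g‖ ^ 2 := by
    have h1 : η / (2 * μ) * (f x - fstar) ≤ η / (2 * μ) * (μ * ‖g‖ ^ 2) := by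
      apply mul_le_mul_of_nonneg_left hPLx
      positivity
    have h2 : η / (2 * μ) * (μ * ‖g‖ ^ 2) = η / 2 * ‖g‖ ^ 2 := by
      field_simp
    linarith
  linarith [hstep, hfac]
end
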